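/- arXiv:2212.12100 — 8 statements merged into one kernel-verified Lean document; each statement's English description precedes it below -/
import Mathlib

section
/- A generalized polyhedral convex set Q = {x ∈ M : ⟨x_i*, x⟩ ≤ α_i, i = 1,…,m}, where M is a closed affine subspace of a locally convex Hausdorff topological vector space X, is a polyhedral convex set (i.e., definable by finitely many continuous linear inequalities alone) if and only if M has finite codimension. -/
open Set Pointwise

def IsPolyhedral {X : Type*} [AddCommGroup X] [Module ℝ X] [TopologicalSpace X]
    (P : Set X) : Prop :=
  ∃ (m : ℕ) (f : Fin m → X →L[ℝ] ℝ) (α : Fin m → ℝ),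
    P = {x : X | ∀ i, f i x ≤ α i}

def IsGPolyhedral {X : Type*} [AddCommGroup X] [Module ℝ X] [TopologicalSpace X]
    (Q : Set X) : Prop :=
  ∃ (P : Set X) (a : X) (L : Submodule ℝ X),
    IsPolyhedral P ∧ IsClosed (L : Set X) ∧ Q = P ∩ (a +ᵥ (L : Set X))

def normalCone {X : Type*} [AddCommGroup X] [Module ℝ X] [TopologicalSpace X]
    (Ω : Set X) (xb : X) : Set (X →L[ℝ] ℝ) :=
  {f | ∀ x ∈ Ω, f (x - xb) ≤ 0}

def gph {X Y : Type*} (F : X → Set Y) : Set (X × Y) := {p | p.2 ∈ F p.1}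

def coderiv {X Y : Type*} [AddCommGroup X] [Module ℝ X] [TopologicalSpace X]
    [AddCommGroup Y] [Module ℝ Y] [TopologicalSpace Y]
    (F : X → Set Y) (xb : X) (yb : Y) (v : Y →L[ℝ] ℝ) : Set (X →L[ℝ] ℝ) :=
  {u | ∀ x : X, ∀ y ∈ F x, u (x - xb) - v (y - yb) ≤ 0}

def epi {X : Type*} (f : X → EReal) : Set (X × ℝ) := {p | f p.1 ≤ (p.2 : EReal)}

def subdiff {X : Type*} [AddCommGroup X] [Module ℝ X] [TopologicalSpace X]
    (f : X → EReal) (xb : X) : Set (X →L[ℝ] ℝ) :=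
  {g | ∀ x : X, ((g (x - xb) : ℝ) : EReal) + f xb ≤ f x}

def singSubdiff {X : Type*} [AddCommGroup X] [Module ℝ X] [TopologicalSpace X]
    (f : X → EReal) (xb : X) : Set (X →L[ℝ] ℝ) :=
  {g | ∀ x : X, ∀ α : ℝ, f x ≤ (α : EReal) → g (x - xb) ≤ 0}

variable {X : Type*} [AddCommGroup X] [Module ℝ X] [TopologicalSpace X]
  [IsTopologicalAddGroup X] [ContinuousSMul ℝ X] [LocallyConvexSpace ℝ X] [T2Space X]
variable {Y : Type*} [AddCommGroup Y] [Module ℝ Y] [TopologicalSpace Y]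
  [IsTopologicalAddGroup Y] [ContinuousSMul ℝ Y] [LocallyConvexSpace ℝ Y] [T2Space Y]
variable {Z : Type*} [AddCommGroup Z] [Module ℝ Z] [TopologicalSpace Z]
  [IsTopologicalAddGroup Z] [ContinuousSMul ℝ Z] [LocallyConvexSpace ℝ Z] [T2Space Z]

/-!
If a nonempty polyhedral set `{x | ∀ i, f i x ≤ α i}` lies in `a + L`, then it is invariant under
translation by the common kernel of the `f i`, which therefore lies in `L`; that kernel has finite
codimension, hence so does `L`. Conversely, if `L` is closed of finite codimension then `E ⧸ L` is a
finite-dimensional Hausdorff space, so its coordinate functionals are continuous, and `a + L` is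
cut out by the finitely many equations `c (x - a) = 0` with `c` such a coordinate.
-/

section Polyhedral

variable {E : Type*} [AddCommGroup E] [Module ℝ E] [TopologicalSpace E]

lemma isPolyhedral_setOf_forall_le {ι : Type*} [Finite ι] (f : ι → E →L[ℝ] ℝ) (α : ι → ℝ) :
    IsPolyhedral {x : E | ∀ i, f i x ≤ α i} := by
  let e := Finite.equivFin ι
  refine ⟨Nat.card ι, f ∘ e.symm, α ∘ e.symm, ?_⟩
  ext x
  exact e.symm.forall_congr_right.symm

lemma IsPolyhedral.inter {P Q : Set E} (hP : IsPolyhedral P) (hQ : IsPolyhedral Q) :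
    IsPolyhedral (P ∩ Q) := by
  obtain ⟨m, f, α, rfl⟩ := hP
  obtain ⟨k, g, β, rfl⟩ := hQ
  convert isPolyhedral_setOf_forall_le (Sum.elim f g) (Sum.elim α β) using 1
  ext x
  simp [Sum.forall]

lemma isPolyhedral_setOf_forall_eq {ι : Type*} [Finite ι] (f : ι → E →L[ℝ] ℝ) (α : ι → ℝ) :
    IsPolyhedral {x : E | ∀ i, f i x = α i} := by
  convert (isPolyhedral_setOf_forall_le f α).inter
    (isPolyhedral_setOf_forall_le (fun i ↦ -f i) (fun i ↦ -α i)) using 1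
  ext x
  simp [le_antisymm_iff, forall_and]

lemma IsPolyhedral.exists_cofg_add_mem {P : Set E} (hP : IsPolyhedral P) :
    ∃ K : Submodule ℝ E, K.CoFG ∧ ∀ x ∈ P, ∀ v ∈ K, x + v ∈ P := by
  obtain ⟨m, f, α, rfl⟩ := hP
  let F : E →ₗ[ℝ] Fin m → ℝ := LinearMap.pi fun i ↦ (f i : E →ₗ[ℝ] ℝ)
  refine ⟨LinearMap.ker F, Submodule.CoFG.ker F, fun x hx v hv i ↦ ?_⟩
  have hfv : f i v = 0 := congrFun hv i
  simpa [hfv] using hx i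

lemma IsPolyhedral.cofg_of_subset_vadd {P : Set E} (hP : IsPolyhedral P) (hne : P.Nonempty)
    {a : E} {L : Submodule ℝ E} (hPL : P ⊆ a +ᵥ (L : Set E)) : L.CoFG := by
  obtain ⟨K, hK, hKP⟩ := hP.exists_cofg_add_mem
  obtain ⟨q, hq⟩ := hne
  refine hK.of_le fun v hv ↦ ?_
  have hqL : -a + q ∈ L := mem_leftAddCoset_iff a |>.mp (hPL hq)
  have hqvL : -a + (q + v) ∈ L := mem_leftAddCoset_iff a |>.mp (hPL (hKP q hq v hv))
  simpa [← add_assoc] using L.sub_mem hqvL hqL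

variable [IsTopologicalAddGroup E] [ContinuousSMul ℝ E]

lemma Submodule.exists_continuousLinearMap_forall_mem_iff {L : Submodule ℝ E}
    (hL : IsClosed (L : Set E)) [L.CoFG] :
    ∃ (n : ℕ) (φ : E →L[ℝ] Fin n → ℝ), ∀ x, x ∈ L ↔ φ x = 0 := by
  -- `hL` is an instance argument here: it makes `E ⧸ L` Hausdorff, so that `b.equivFun` is continuous.
  let b := Module.finBasis ℝ (E ⧸ L)
  refine ⟨_, b.equivFun.toContinuousLinearEquiv.toContinuousLinearMap ∘L L.mkQL, fun x ↦ ?_⟩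
  rw [← Submodule.Quotient.mk_eq_zero L]
  exact b.equivFun.map_eq_zero_iff.symm

lemma isPolyhedral_vadd_submodule {L : Submodule ℝ E} (hL : IsClosed (L : Set E)) [L.CoFG]
    (a : E) : IsPolyhedral (a +ᵥ (L : Set E)) := by
  obtain ⟨n, φ, hφ⟩ := L.exists_continuousLinearMap_forall_mem_iff hL
  convert isPolyhedral_setOf_forall_eq (fun i ↦ ContinuousLinearMap.proj i ∘L φ) (φ a) using 1
  ext x
  rw [mem_leftAddCoset_iff, SetLike.mem_coe, hφ, map_add, map_neg, neg_add_eq_zero, funext_iff]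
  exact forall_congr' fun _ ↦ eq_comm

end Polyhedral

set_option linter.unusedSectionVars false in
theorem gpcs_is_pcs_iff_finite_codim
    (m : ℕ) (xs : Fin m → X →L[ℝ] ℝ) (α : Fin m → ℝ)
    (a : X) (L : Submodule ℝ X) (hL : IsClosed (L : Set X))
    (Q : Set X)
    (hQ : Q = {x : X | x ∈ a +ᵥ (L : Set X) ∧ ∀ i, xs i x ≤ α i})
    (hne : Q.Nonempty) :
    IsPolyhedral Q ↔ FiniteDimensional ℝ (X ⧸ L) := by
  have hQ' : Q = {x : X | ∀ i, xs i x ≤ α i} ∩ (a +ᵥ (L : Set X)) := by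
    rw [hQ, inter_comm]
    rfl
  refine ⟨fun hP ↦ hP.cofg_of_subset_vadd hne (hQ' ▸ inter_subset_right), fun _ ↦ ?_⟩
  rw [hQ']
  exact (isPolyhedral_setOf_forall_le xs α).inter (isPolyhedral_vadd_submodule hL a)
end

section
/- If a nonempty generalized polyhedral convex set Q (the intersection of a closed affine subspace M with finitely many continuous linear inequality constraints) can be written as {x ∈ X : ⟨z_i*, x⟩ ≤ γ_i, i = 1,…,p} for some z_i* ∈ X* and γ_i ∈ ℝ, then the closed affine subspace M containing Q has finite codimension. -/
open Set Pointwise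

variable {X : Type*} [AddCommGroup X] [Module ℝ X] [TopologicalSpace X]
  [IsTopologicalAddGroup X] [ContinuousSMul ℝ X] [LocallyConvexSpace ℝ X] [T2Space X]
variable {Y : Type*} [AddCommGroup Y] [Module ℝ Y] [TopologicalSpace Y]
  [IsTopologicalAddGroup Y] [ContinuousSMul ℝ Y] [LocallyConvexSpace ℝ Y] [T2Space Y]
variable {Z : Type*} [AddCommGroup Z] [Module ℝ Z] [TopologicalSpace Z]
  [IsTopologicalAddGroup Z] [ContinuousSMul ℝ Z] [LocallyConvexSpace ℝ Z] [T2Space Z]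

/-!
A polyhedral set `{x | ∀ i, zᵢ x ≤ γᵢ}` is invariant under translation by the common kernel `K` of
the `zᵢ`. If it is nonempty and contained in the affine subspace `a +ᵥ L`, then `K ≤ L`. Since `K`
is the kernel of a linear map into `ℝᵖ`, it has finite codimension, and hence so does `L`.
-/

theorem add_mem_setOf_le_of_mem_ker_pi {ι R M : Type*} [Semiring R] [Preorder R]
    [AddCommMonoid M] [Module R M] {f : ι → M →ₗ[R] R} {γ : ι → R} {x v : M}
    (hx : x ∈ {x | ∀ i, f i x ≤ γ i}) (hv : v ∈ LinearMap.ker (LinearMap.pi f)) :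
    x + v ∈ {x | ∀ i, f i x ≤ γ i} := by
  intro i
  have hfv : f i v = 0 := congrFun (LinearMap.mem_ker.mp hv) i
  simpa [hfv] using hx i

theorem Submodule.mem_of_add_mem_vadd {R M : Type*} [Ring R] [AddCommGroup M] [Module R M]
    {L : Submodule R M} {a x v : M} (hx : x ∈ a +ᵥ (L : Set M))
    (hxv : x + v ∈ a +ᵥ (L : Set M)) : v ∈ L := by
  rw [mem_leftAddCoset_iff] at hx hxv
  simpa using L.sub_mem hxv hx

theorem ker_pi_le_of_setOf_le_subset_vadd {ι R M : Type*} [Ring R] [Preorder R]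
    [AddCommGroup M] [Module R M] {f : ι → M →ₗ[R] R} {γ : ι → R} {a : M} {L : Submodule R M}
    (hne : {x | ∀ i, f i x ≤ γ i}.Nonempty) (hsub : {x | ∀ i, f i x ≤ γ i} ⊆ a +ᵥ (L : Set M)) :
    LinearMap.ker (LinearMap.pi f) ≤ L := by
  obtain ⟨x, hx⟩ := hne
  intro v hv
  exact L.mem_of_add_mem_vadd (hsub hx) (hsub (add_mem_setOf_le_of_mem_ker_pi hx hv))

theorem pcs_representation_implies_finite_codim_general
    (m : ℕ) (xs : Fin m → X →L[ℝ] ℝ) (α : Fin m → ℝ)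
    (a : X) (L : Submodule ℝ X)
    (Q : Set X)
    (hQ : Q = {x : X | x ∈ a +ᵥ (L : Set X) ∧ ∀ i, xs i x ≤ α i})
    (hne : Q.Nonempty)
    (p : ℕ) (zs : Fin p → X →L[ℝ] ℝ) (γ : Fin p → ℝ)
    (hQ' : Q = {x : X | ∀ i, zs i x ≤ γ i}) :
    FiniteDimensional ℝ (X ⧸ L) := by
  have hsub : Q ⊆ a +ᵥ (L : Set X) := by
    rw [hQ]
    exact fun x hx ↦ hx.1
  rw [hQ'] at hne hsub
  let φ : X →ₗ[ℝ] (Fin p → ℝ) := LinearMap.pi fun i ↦ (zs i : X →ₗ[ℝ] ℝ)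
  have hker : LinearMap.ker φ ≤ L := ker_pi_le_of_setOf_le_subset_vadd hne hsub
  exact (Submodule.CoFG.ker φ).of_le hker

theorem pcs_representation_implies_finite_codim
    (m : ℕ) (xs : Fin m → X →L[ℝ] ℝ) (α : Fin m → ℝ)
    (a : X) (L : Submodule ℝ X) (hL : IsClosed (L : Set X))
    (Q : Set X)
    (hQ : Q = {x : X | x ∈ a +ᵥ (L : Set X) ∧ ∀ i, xs i x ≤ α i})
    (hne : Q.Nonempty)
    (p : ℕ) (zs : Fin p → X →L[ℝ] ℝ) (γ : Fin p → ℝ)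
    (hQ' : Q = {x : X | ∀ i, zs i x ≤ γ i}) :
    FiniteDimensional ℝ (X ⧸ L) :=
  pcs_representation_implies_finite_codim_general m xs α a L Q hQ hne p zs γ hQ'
end

section
/- Let X = ℓ², Ω₀ the set of finitely supported sequences in ℓ², y = (2^{1−n})_n, z = (1/n)_n, M = span{z}, Ω = y + Ω₀. Then there exist no x* ∈ ℓ² \ {0} and α ∈ ℝ such that ⟨x*, x⟩ ≤ α ≤ ⟨x*, w⟩ for all x ∈ M and w ∈ Ω with strict inequality α < ⟨x*, ŵ⟩ for some ŵ ∈ Ω; i.e., M and Ω cannot be separated by a closed hyperplane not containing Ω. -/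
open Set

/-! A linear functional bounded below on the affine subspace `y + Ω₀` vanishes on `Ω₀`; as `Ω₀`
contains every unit vector `eₙ`, this forces `x* = 0`. -/

theorem LinearMap.apply_eq_zero_of_forall_le_apply_add {𝕜 E : Type*} [Field 𝕜] [LinearOrder 𝕜]
    [IsStrictOrderedRing 𝕜] [AddCommGroup E] [Module 𝕜 E] (f : E →ₗ[𝕜] 𝕜) {p : Submodule 𝕜 E}
    {y : E} {α : 𝕜} (h : ∀ u ∈ p, α ≤ f (y + u)) {u : E} (hu : u ∈ p) : f u = 0 := by
  by_contra hfu
  -- along `y + t • u` the functional takes every value, in particular `α - 1`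
  have hlow := h (((α - 1 - f y) / f u) • u) (p.smul_mem _ hu)
  rw [map_add, map_smul, smul_eq_mul, div_mul_cancel₀ _ hfu] at hlow
  linarith

namespace lp

variable {ι 𝕜 : Type*} {E : ι → Type*} [∀ i, NormedAddCommGroup (E i)] {p : ENNReal}

variable (𝕜 E p) in
def finitelySupported [NormedRing 𝕜] [∀ i, Module 𝕜 (E i)] [∀ i, IsBoundedSMul 𝕜 (E i)]
    [Fact (1 ≤ p)] : Submodule 𝕜 (lp E p) where
  carrier := {u | {i | u i ≠ 0}.Finite}
  zero_mem' := by simp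
  add_mem' {u v} hu hv := (hu.union hv).subset fun i hi => by
    by_contra! h
    simp_all
  smul_mem' c u hu := hu.subset fun i hi => by
    by_contra! h
    simp_all

theorem single_mem_finitelySupported [NormedRing 𝕜] [∀ i, Module 𝕜 (E i)]
    [∀ i, IsBoundedSMul 𝕜 (E i)] [Fact (1 ≤ p)] [DecidableEq ι] (i : ι) (a : E i) :
    lp.single p i a ∈ finitelySupported 𝕜 E p :=
  (finite_singleton i).subset fun j hj => by
    by_contra! h
    simp_all [Pi.single_eq_of_ne h]

theorem eq_zero_of_forall_inner_single_eq_zero [RCLike 𝕜] [∀ i, InnerProductSpace 𝕜 (E i)]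
    [DecidableEq ι] {f : lp E 2} (h : ∀ i (a : E i), inner 𝕜 f (lp.single 2 i a) = 0) : f = 0 := by
  ext i
  simpa [inner_single_right] using h i (f i)

end lp

theorem no_proper_separation_line_affine_general
    (y z : lp (fun _ : ℕ => ℝ) 2) :
    ¬ ∃ (xs : lp (fun _ : ℕ => ℝ) 2) (α : ℝ), xs ≠ 0 ∧
        (∀ μ : ℝ, inner (𝕜 := ℝ) xs (μ • z) ≤ α) ∧
        (∀ u : lp (fun _ : ℕ => ℝ) 2, {n : ℕ | u n ≠ 0}.Finite →
          α ≤ inner (𝕜 := ℝ) xs (y + u)) ∧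
        (∃ u : lp (fun _ : ℕ => ℝ) 2, {n : ℕ | u n ≠ 0}.Finite ∧
          α < inner (𝕜 := ℝ) xs (y + u)) := by
  rintro ⟨xs, α, hxs, -, hbelow, -⟩
  refine hxs (lp.eq_zero_of_forall_inner_single_eq_zero (𝕜 := ℝ) fun i a => ?_)
  exact (innerₛₗ ℝ xs).apply_eq_zero_of_forall_le_apply_add hbelow
    (lp.single_mem_finitelySupported ..)

theorem no_proper_separation_line_affine
    (y z : lp (fun _ : ℕ => ℝ) 2)
    (hy : ∀ n : ℕ, y n = (1 / 2 : ℝ) ^ n)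
    (hz : ∀ n : ℕ, z n = 1 / (n + 1 : ℝ)) :
    ¬ ∃ (xs : lp (fun _ : ℕ => ℝ) 2) (α : ℝ), xs ≠ 0 ∧
        (∀ μ : ℝ, inner (𝕜 := ℝ) xs (μ • z) ≤ α) ∧
        (∀ u : lp (fun _ : ℕ => ℝ) 2, {n : ℕ | u n ≠ 0}.Finite →
          α ≤ inner (𝕜 := ℝ) xs (y + u)) ∧
        (∃ u : lp (fun _ : ℕ => ℝ) 2, {n : ℕ | u n ≠ 0}.Finite ∧
          α < inner (𝕜 := ℝ) xs (y + u)) :=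
  no_proper_separation_line_affine_general y z
end

section
/- Let X be a real locally convex Hausdorff topological vector space, L and M closed linear subspaces with closure(L + M) = X but L + M ≠ X, and a ∈ X \ (L + M), Ω = a + L. Then M ∩ Ω = ∅ and there exist no x* ∈ X* \ {0} and α ∈ ℝ with sup_{x∈M} ⟨x*, x⟩ ≤ α ≤ inf_{y∈Ω} ⟨x*, y⟩; i.e., M and the closed affine set Ω cannot be separated by any closed hyperplane. -/
open Set Pointwise

variable {X : Type*} [AddCommGroup X] [Module ℝ X] [TopologicalSpace X]
  [IsTopologicalAddGroup X] [ContinuousSMul ℝ X] [LocallyConvexSpace ℝ X] [T2Space X]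
variable {Y : Type*} [AddCommGroup Y] [Module ℝ Y] [TopologicalSpace Y]
  [IsTopologicalAddGroup Y] [ContinuousSMul ℝ Y] [LocallyConvexSpace ℝ Y] [T2Space Y]
variable {Z : Type*} [AddCommGroup Z] [Module ℝ Z] [TopologicalSpace Z]
  [IsTopologicalAddGroup Z] [ContinuousSMul ℝ Z] [LocallyConvexSpace ℝ Z] [T2Space Z]

/-
A linear functional bounded on one side on a subspace vanishes on it, since rescaling a point
with nonzero value pushes the value past any bound; the same holds on a translate `a + L`.
So a hyperplane separating `M` from `a + L` comes from a continuous functional vanishing on the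
dense set `L + M`, which must be zero.
-/

section BoundedFunctional

variable {𝕜 E F : Type*} [Field 𝕜] [LinearOrder 𝕜] [IsStrictOrderedRing 𝕜] [AddCommGroup E]
  [Module 𝕜 E] [FunLike F E 𝕜] [LinearMapClass F 𝕜 E 𝕜] (p : Submodule 𝕜 E) (f : F)

theorem Submodule.eq_zero_of_forall_le {α : 𝕜} (h : ∀ x ∈ p, f x ≤ α) {x : E} (hx : x ∈ p) :
    f x = 0 := by
  by_contra hfx
  have hscaled := h (((α + 1) / f x) • x) (p.smul_mem _ hx)
  rw [map_smul, smul_eq_mul, div_mul_cancel₀ _ hfx] at hscaled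
  linarith

theorem Submodule.eq_zero_of_forall_vadd_ge {a : E} {α : 𝕜}
    (h : ∀ y ∈ a +ᵥ (p : Set E), α ≤ f y) {x : E} (hx : x ∈ p) : f x = 0 := by
  refine p.eq_zero_of_forall_le f (α := f a - α) (fun l hl => ?_) hx
  have hshift := h (a + -l) (vadd_mem_vadd_set (p.neg_mem hl))
  rw [map_add, map_neg] at hshift
  linarith

end BoundedFunctional

theorem Submodule.inter_vadd_eq_empty_of_notMem_add {R E : Type*} [Ring R] [AddCommGroup E]
    [Module R E] (L M : Submodule R E) {a : E} (ha : a ∉ (L : Set E) + M) :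
    (M : Set E) ∩ (a +ᵥ (L : Set E)) = ∅ := by
  refine eq_empty_of_forall_notMem fun x ⟨hxM, l, hl, hx⟩ => ha ⟨-l, L.neg_mem hl, x, hxM, ?_⟩
  subst hx
  show -l + (a + l) = a
  abel

theorem no_separation_closed_subspaces_general
    (L M : Submodule ℝ X)
    (hdense : closure ((L : Set X) + (M : Set X)) = Set.univ)
    (a : X) (ha : a ∉ (L : Set X) + (M : Set X)) :
    (M : Set X) ∩ (a +ᵥ (L : Set X)) = ∅ ∧
      ¬ ∃ (f : X →L[ℝ] ℝ) (α : ℝ), f ≠ 0 ∧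
        (∀ x ∈ (M : Set X), f x ≤ α) ∧ (∀ y ∈ a +ᵥ (L : Set X), α ≤ f y) := by
  refine ⟨L.inter_vadd_eq_empty_of_notMem_add M ha, ?_⟩
  rintro ⟨f, α, hf, hfM, hfΩ⟩
  have hvanish : EqOn f 0 ((L : Set X) + M) := by
    rintro _ ⟨l, hl, m, hm, rfl⟩
    rw [Pi.zero_apply, map_add, L.eq_zero_of_forall_vadd_ge f hfΩ hl,
      M.eq_zero_of_forall_le f hfM hm, add_zero]
  exact hf <| DFunLike.coe_injective <|
    Continuous.ext_on (dense_iff_closure_eq.mpr hdense) f.continuous continuous_zero hvanish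

theorem no_separation_closed_subspaces
    (L M : Submodule ℝ X) (hL : IsClosed (L : Set X)) (hM : IsClosed (M : Set X))
    (hdense : closure ((L : Set X) + (M : Set X)) = Set.univ)
    (hnotall : (L : Set X) + (M : Set X) ≠ Set.univ)
    (a : X) (ha : a ∉ (L : Set X) + (M : Set X)) :
    (M : Set X) ∩ (a +ᵥ (L : Set X)) = ∅ ∧
      ¬ ∃ (f : X →L[ℝ] ℝ) (α : ℝ), f ≠ 0 ∧
        (∀ x ∈ (M : Set X), f x ≤ α) ∧ (∀ y ∈ a +ᵥ (L : Set X), α ≤ f y) :=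
  no_separation_closed_subspaces_general L M hdense a ha
end

section
/- If P is a polyhedral convex set and M is a closed affine subspace of X with parallel subspace L = M − M, then for every x̄ ∈ P ∩ M, the normal cone satisfies N(x̄; P ∩ M) = N(x̄; P) + L^⊥, where L^⊥ = {x* ∈ X* : ⟨x*, v⟩ = 0 for all v ∈ L}. -/
/-! The inclusion `⊇` holds for any two sets. For `⊆`, take `g ∈ N(x̄; P ∩ M)`. If `v ∈ L` does
not increase any constraint of `P` active at `x̄`, then `x̄ + t v ∈ P ∩ M` for small `t > 0`, so
`g v ≤ 0`. Farkas' lemma on `L` then writes `g` restricted to `L` as a nonnegative combination of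
the active constraints; that combination lies in `N(x̄; P)`, and `g` minus it vanishes on `L`. -/

open Set Pointwise

variable {X : Type*} [AddCommGroup X] [Module ℝ X] [TopologicalSpace X]
  [IsTopologicalAddGroup X] [ContinuousSMul ℝ X] [LocallyConvexSpace ℝ X] [T2Space X]
variable {Y : Type*} [AddCommGroup Y] [Module ℝ Y] [TopologicalSpace Y]
  [IsTopologicalAddGroup Y] [ContinuousSMul ℝ Y] [LocallyConvexSpace ℝ Y] [T2Space Y]
variable {Z : Type*} [AddCommGroup Z] [Module ℝ Z] [TopologicalSpace Z]
  [IsTopologicalAddGroup Z] [ContinuousSMul ℝ Z] [LocallyConvexSpace ℝ Z] [T2Space Z]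

theorem Finset.sum_insert_update_smul {ι R M : Type*} [DecidableEq ι] [SMul R M] [AddCommMonoid M]
    {s : Finset ι} {j : ι} (hj : j ∉ s) (c : ι → R) (μ : R) (h : ι → M) :
    ∑ i ∈ insert j s, Function.update c j μ i • h i = μ • h j + ∑ i ∈ s, c i • h i := by
  rw [Finset.sum_insert hj, Function.update_self]
  congr 1
  exact Finset.sum_congr rfl fun i hi => by rw [Function.update_of_ne (ne_of_mem_of_not_mem hi hj)]

theorem Module.Dual.comp_id_sub_smulRight {R V : Type*} [CommRing R] [AddCommGroup V] [Module R V]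
    (φ ψ : Module.Dual R V) (w : V) :
    φ ∘ₗ (LinearMap.id - ψ.smulRight w) = φ - φ w • ψ := by
  ext v
  simp [mul_comm]

theorem Submodule.mem_vadd_iff_sub_mem {R E : Type*} [Ring R] [AddCommGroup E] [Module R E]
    {a x : E} {L : Submodule R E} : x ∈ a +ᵥ (L : Set E) ↔ x - a ∈ L := by
  rw [mem_vadd_set_iff_neg_vadd_mem, vadd_eq_add, neg_add_eq_sub, SetLike.mem_coe]

theorem Submodule.add_mem_vadd {R E : Type*} [Ring R] [AddCommGroup E] [Module R E]
    {a x v : E} {L : Submodule R E} (hx : x ∈ a +ᵥ (L : Set E)) (hv : v ∈ L) :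
    x + v ∈ a +ᵥ (L : Set E) := by
  rw [Submodule.mem_vadd_iff_sub_mem] at hx ⊢
  rw [add_sub_right_comm]
  exact L.add_mem hx hv

section Farkas

variable {𝕜 V ι : Type*} [Field 𝕜] [LinearOrder 𝕜] [IsStrictOrderedRing 𝕜]
  [AddCommGroup V] [Module 𝕜 V]

theorem Module.Dual.eq_zero_of_forall_nonpos {g : Module.Dual 𝕜 V} (hg : ∀ v, g v ≤ 0) :
    g = 0 :=
  LinearMap.ext fun v => le_antisymm (hg v) (by simpa using hg (-v))

/-- Farkas' lemma, by Bartl's induction: if some `w` with `h i w ≤ 0` for `i ∈ s` has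
`g w > 0`, then `h j w > 0`, and projecting along `w` onto `ker (h j)` removes `j`. -/
theorem Module.Dual.exists_nonneg_eq_sum_smul_of_forall_nonpos
    (s : Finset ι) (h : ι → Module.Dual 𝕜 V) (g : Module.Dual 𝕜 V)
    (hg : ∀ v, (∀ i ∈ s, h i v ≤ 0) → g v ≤ 0) :
    ∃ c : ι → 𝕜, (∀ i, 0 ≤ c i) ∧ g = ∑ i ∈ s, c i • h i := by
  classical
  induction s using Finset.induction_on generalizing h g with
  | empty =>
    exact ⟨0, fun _ => le_rfl, by simpa using eq_zero_of_forall_nonpos fun v => hg v (by simp)⟩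
  | insert j s hj ih =>
    by_cases hs : ∀ v, (∀ i ∈ s, h i v ≤ 0) → g v ≤ 0
    · obtain ⟨c, hc, rfl⟩ := ih h g hs
      refine ⟨Function.update c j 0, fun i => ?_, by simp [Finset.sum_insert_update_smul hj]⟩
      rcases eq_or_ne i j with rfl | hi <;> simp [*]
    push Not at hs
    obtain ⟨w₀, hw₀s, hgw₀⟩ := hs
    have hjw₀ : 0 < h j w₀ := by
      by_contra! hj0
      exact hgw₀.not_ge (hg w₀ (by simpa [hj0] using hw₀s))
    set w := (h j w₀)⁻¹ • w₀
    have hw : h j w = 1 := by simp [w, hjw₀.ne']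
    have hws : ∀ i ∈ s, h i w ≤ 0 := fun i hi => by
      simpa [w] using mul_nonpos_of_nonneg_of_nonpos (inv_nonneg.2 hjw₀.le) (hw₀s i hi)
    have hgw : 0 ≤ g w := by simpa [w] using (mul_pos (inv_pos.2 hjw₀) hgw₀).le
    set π := LinearMap.id - (h j).smulRight w
    have hjπ : ∀ v, h j (π v) = 0 := fun v => by simp [π, hw]
    obtain ⟨c, hc, hgc⟩ := ih (fun i => h i ∘ₗ π) (g ∘ₗ π) fun v hv =>
      hg (π v) (Finset.forall_mem_insert _ _ _ |>.2 ⟨(hjπ v).le, hv⟩)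
    refine ⟨Function.update c j (g w - ∑ i ∈ s, c i * h i w), fun i => ?_, ?_⟩
    · rcases eq_or_ne i j with rfl | hi
      · have := Finset.sum_nonpos fun k hk => mul_nonpos_of_nonneg_of_nonpos (hc k) (hws k hk)
        simp only [Function.update_self]
        linarith
      · simpa [hi] using hc i
    · simp only [π, comp_id_sub_smulRight, smul_sub, Finset.sum_sub_distrib, smul_smul,
        ← Finset.sum_smul] at hgc
      rw [Finset.sum_insert_update_smul hj]
      linear_combination (norm := module) hgc

end Farkas

section NormalCone

variable {E : Type*} [AddCommGroup E] [Module ℝ E] [TopologicalSpace E]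

theorem normalCone_add_subset_normalCone_inter (Ω₁ Ω₂ : Set E) (xb : E) :
    normalCone Ω₁ xb + normalCone Ω₂ xb ⊆ normalCone (Ω₁ ∩ Ω₂) xb := by
  rintro _ ⟨u, hu, w, hw, rfl⟩ x hx
  simpa using add_nonpos (hu x hx.1) (hw x hx.2)

theorem sum_smul_mem_normalCone {ι : Type*} {s : Finset ι} {c : ι → ℝ} {φ : ι → E →L[ℝ] ℝ}
    {Ω : Set E} {xb : E} (hc : ∀ i ∈ s, 0 ≤ c i) (hφ : ∀ i ∈ s, φ i ∈ normalCone Ω xb) :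
    ∑ i ∈ s, c i • φ i ∈ normalCone Ω xb := fun x hx => by
  simpa [sum_apply] using
    Finset.sum_nonpos fun i hi => mul_nonpos_of_nonneg_of_nonpos (hc i hi) (hφ i hi x hx)

theorem normalCone_vadd_submodule {a xb : E} {L : Submodule ℝ E}
    (hxb : xb ∈ a +ᵥ (L : Set E)) :
    normalCone (a +ᵥ (L : Set E)) xb = {f : E →L[ℝ] ℝ | ∀ v ∈ L, f v = 0} := by
  ext f
  refine ⟨fun hf v hv => le_antisymm ?_ ?_, fun hf x hx => (hf _ ?_).le⟩
  · simpa using hf _ (Submodule.add_mem_vadd hxb hv)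
  · simpa using hf _ (Submodule.add_mem_vadd hxb (L.neg_mem hv))
  · rw [Submodule.mem_vadd_iff_sub_mem] at hx hxb
    simpa using L.sub_mem hx hxb

section Polyhedron

open Filter Topology

variable {ι : Type*} (f : ι → E →L[ℝ] ℝ) (α : ι → ℝ)

noncomputable def activeIndices [Fintype ι] (xb : E) : Finset ι := by
  classical exact {i | f i xb = α i}

variable {f α}

theorem mem_activeIndices [Fintype ι] {xb : E} {i : ι} :
    i ∈ activeIndices f α xb ↔ f i xb = α i := by
  classical simp [activeIndices]

theorem mem_normalCone_of_mem_activeIndices [Fintype ι] {xb : E} {i : ι}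
    (hi : i ∈ activeIndices f α xb) : f i ∈ normalCone {x | ∀ i, f i x ≤ α i} xb :=
  fun x hx => by simpa [mem_activeIndices.1 hi] using hx i

theorem exists_pos_add_smul_mem_of_active_nonpos [Fintype ι] {xb v : E}
    (hxb : xb ∈ {x | ∀ i, f i x ≤ α i}) (hv : ∀ i ∈ activeIndices f α xb, f i v ≤ 0) :
    ∃ t : ℝ, 0 < t ∧ xb + t • v ∈ {x | ∀ i, f i x ≤ α i} := by
  have hev : ∀ i, ∀ᶠ t in 𝓝[>] (0 : ℝ), f i xb + t * f i v ≤ α i := fun i => by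
    by_cases hi : f i xb = α i
    · filter_upwards [self_mem_nhdsWithin] with t (ht : 0 < t)
      nlinarith [hv i (mem_activeIndices.2 hi)]
    · have hcont : Tendsto (fun t : ℝ => f i xb + t * f i v) (𝓝[>] 0) (𝓝 (f i xb)) :=
        ((continuous_const.add (continuous_id.mul continuous_const)).tendsto' 0 _
          (by simp)).mono_left nhdsWithin_le_nhds
      exact hcont.eventually (ge_mem_nhds ((hxb i).lt_of_ne hi))
  obtain ⟨t, ht, htpos⟩ := ((eventually_all.2 hev).and self_mem_nhdsWithin).exists
  exact ⟨t, htpos, fun i => by simpa using ht i⟩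

theorem normalCone_inter_vadd_submodule_subset [Fintype ι] {a xb : E} {L : Submodule ℝ E}
    (hxbP : xb ∈ {x | ∀ i, f i x ≤ α i}) (hxbM : xb ∈ a +ᵥ (L : Set E)) :
    normalCone ({x | ∀ i, f i x ≤ α i} ∩ (a +ᵥ (L : Set E))) xb ⊆
      normalCone {x | ∀ i, f i x ≤ α i} xb + {g : E →L[ℝ] ℝ | ∀ v ∈ L, g v = 0} := by
  intro g hg
  have hL : ∀ v ∈ L, (∀ i ∈ activeIndices f α xb, f i v ≤ 0) → g v ≤ 0 := fun v hv hact => by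
    obtain ⟨t, htpos, hxt⟩ := exists_pos_add_smul_mem_of_active_nonpos hxbP hact
    have := hg _ ⟨hxt, Submodule.add_mem_vadd hxbM (L.smul_mem t hv)⟩
    rw [add_sub_cancel_left, map_smul, smul_eq_mul] at this
    exact nonpos_of_mul_nonpos_right this htpos
  obtain ⟨c, hc, hgc⟩ := Module.Dual.exists_nonneg_eq_sum_smul_of_forall_nonpos
    (activeIndices f α xb) (fun i => (f i : E →ₗ[ℝ] ℝ) ∘ₗ L.subtype) ((g : E →ₗ[ℝ] ℝ) ∘ₗ L.subtype)
    fun v hv => hL v v.2 hv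
  refine ⟨∑ i ∈ activeIndices f α xb, c i • f i,
    sum_smul_mem_normalCone (fun i _ => hc i) fun i hi => mem_normalCone_of_mem_activeIndices hi,
    g - ∑ i ∈ activeIndices f α xb, c i • f i, fun v hv => ?_, add_sub_cancel _ _⟩
  simpa [sub_eq_zero, sum_apply] using LinearMap.congr_fun hgc ⟨v, hv⟩

end Polyhedron

end NormalCone

theorem normalCone_inter_pcs_affine_general
    (P : Set X) (hP : IsPolyhedral P)
    (a : X) (L : Submodule ℝ X)
    (xb : X) (hxb : xb ∈ P ∩ (a +ᵥ (L : Set X))) :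
    normalCone (P ∩ (a +ᵥ (L : Set X))) xb =
      normalCone P xb + {f : X →L[ℝ] ℝ | ∀ v ∈ L, f v = 0} := by
  obtain ⟨hxbP, hxbM⟩ := hxb
  obtain ⟨m, f, α, rfl⟩ := hP
  refine (normalCone_inter_vadd_submodule_subset hxbP hxbM).antisymm ?_
  rw [← normalCone_vadd_submodule hxbM]
  exact normalCone_add_subset_normalCone_inter _ _ _

theorem normalCone_inter_pcs_affine
    (P : Set X) (hP : IsPolyhedral P)
    (a : X) (L : Submodule ℝ X) (hL : IsClosed (L : Set X))
    (xb : X) (hxb : xb ∈ P ∩ (a +ᵥ (L : Set X))) :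
    normalCone (P ∩ (a +ᵥ (L : Set X))) xb =
      normalCone P xb + {f : X →L[ℝ] ℝ | ∀ v ∈ L, f v = 0} :=
  normalCone_inter_pcs_affine_general P hP a L xb hxb
end

section
/- If P₁ and P₂ are polyhedral convex sets in X, then for every x̄ ∈ P₁ ∩ P₂, N(x̄; P₁ ∩ P₂) = N(x̄; P₁) + N(x̄; P₂). -/
open Set Pointwise

variable {X : Type*} [AddCommGroup X] [Module ℝ X] [TopologicalSpace X]
  [IsTopologicalAddGroup X] [ContinuousSMul ℝ X] [LocallyConvexSpace ℝ X] [T2Space X]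
variable {Y : Type*} [AddCommGroup Y] [Module ℝ Y] [TopologicalSpace Y]
  [IsTopologicalAddGroup Y] [ContinuousSMul ℝ Y] [LocallyConvexSpace ℝ Y] [T2Space Y]
variable {Z : Type*} [AddCommGroup Z] [Module ℝ Z] [TopologicalSpace Z]
  [IsTopologicalAddGroup Z] [ContinuousSMul ℝ Z] [LocallyConvexSpace ℝ Z] [T2Space Z]


/-!
The normal cone to a polyhedron `{x | ∀ i, f i x ≤ α i}` at `x̄` is the cone generated by the
active functionals `f i` with `f i x̄ = α i`: they lie in it trivially, and conversely a normal
vector is nonpositive on every direction that keeps the active constraints, since small steps along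
it stay in the polyhedron, so Farkas' lemma applies. Now `P₁ ∩ P₂` is the polyhedron defined by
both families of constraints, whose active functionals are those of `P₁` together with those of
`P₂`, and the cone generated by a union is the sum of the generated cones.

Farkas' lemma is proved by Fourier–Motzkin elimination: if `u` is positive at some `d₀` where
all but one constraint `f a` are nonpositive, shearing every functional along `d₀` eliminates
`f a` and leaves an instance with one constraint fewer.
-/

open Filter Topology

section Polyhedron

variable {E : Type*} [AddCommGroup E] [Module ℝ E] [TopologicalSpace E] {ι : Type*}

def polyhedron (f : ι → E →L[ℝ] ℝ) (α : ι → ℝ) : Set E := {x | ∀ i, f i x ≤ α i}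

lemma polyhedron_inter {κ : Type*} (f : ι → E →L[ℝ] ℝ) (α : ι → ℝ) (g : κ → E →L[ℝ] ℝ)
    (β : κ → ℝ) :
    polyhedron f α ∩ polyhedron g β = polyhedron (Sum.elim f g) (Sum.elim α β) := by
  ext x
  simp [polyhedron, Sum.forall]

lemma hull_subset_normalCone {Ω : Set E} {xb : E} {s : Set (E →L[ℝ] ℝ)}
    (hs : s ⊆ normalCone Ω xb) : (PointedCone.hull ℝ s : Set (E →L[ℝ] ℝ)) ⊆ normalCone Ω xb := by
  intro u hu
  induction hu using Submodule.span_induction with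
  | mem φ hφ => exact hs hφ
  | zero => intro x _; simp
  | add φ ψ _ _ hφ hψ => intro x hx; simpa using add_nonpos (hφ x hx) (hψ x hx)
  | smul c φ _ hφ => intro x hx; exact mul_nonpos_of_nonneg_of_nonpos c.2 (hφ x hx)

lemma eq_zero_of_forall_apply_nonpos {u : E →L[ℝ] ℝ} (hu : ∀ d, u d ≤ 0) : u = 0 := by
  ext d
  have hneg := hu (-d)
  rw [map_neg, neg_nonpos] at hneg
  exact (hu d).antisymm hneg

lemma sub_div_smul_apply (φ ψ : E →L[ℝ] ℝ) (d₀ d : E) :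
    (φ - (φ d₀ / ψ d₀) • ψ) d = φ (d - (ψ d / ψ d₀) • d₀) := by
  simp only [sub_apply, smul_apply, map_sub, map_smul, smul_eq_mul]
  ring

theorem mem_hull_image_of_forall_nonpos {s : Set ι} (hs : s.Finite) {f : ι → E →L[ℝ] ℝ}
    {u : E →L[ℝ] ℝ} (hu : ∀ d, (∀ i ∈ s, f i d ≤ 0) → u d ≤ 0) :
    u ∈ PointedCone.hull ℝ (f '' s) := by
  induction s, hs using Set.Finite.induction_on generalizing f u with
  | empty =>
    rw [eq_zero_of_forall_apply_nonpos fun d => hu d (by simp)]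
    exact zero_mem _
  | @insert a s _ hs ih =>
    rw [image_insert_eq]
    by_cases hfeas : ∀ d, (∀ i ∈ s, f i d ≤ 0) → u d ≤ 0
    · exact Submodule.span_mono (subset_insert _ _) (ih hfeas)
    push Not at hfeas
    obtain ⟨d₀, hd₀, hud₀⟩ := hfeas
    have ha : 0 < f a d₀ := by
      by_contra! h
      exact (hu d₀ (forall_mem_insert.2 ⟨h, hd₀⟩)).not_gt hud₀
    set T : (E →L[ℝ] ℝ) → E →L[ℝ] ℝ := fun φ => φ - (φ d₀ / f a d₀) • f a with hT
    have hTu : T u ∈ PointedCone.hull ℝ ((T ∘ f) '' s) := by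
      refine ih fun d hd => ?_
      rw [sub_div_smul_apply]
      refine hu _ (forall_mem_insert.2 ⟨?_, fun i hi => sub_div_smul_apply (f i) _ _ d ▸ hd i hi⟩)
      simp [div_mul_cancel₀ _ ha.ne']
    have hTf : PointedCone.hull ℝ ((T ∘ f) '' s) ≤ PointedCone.hull ℝ (insert (f a) (f '' s)) := by
      refine Submodule.span_le.2 ?_
      rintro _ ⟨i, hi, rfl⟩
      have hcoef : 0 ≤ -(f i d₀ / f a d₀) :=
        neg_nonneg.2 (div_nonpos_of_nonpos_of_nonneg (hd₀ i hi) ha.le)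
      change f i - (f i d₀ / f a d₀) • f a ∈ _
      rw [sub_eq_add_neg, ← neg_smul (f i d₀ / f a d₀) (f a)]
      exact add_mem (Submodule.subset_span (mem_insert_of_mem _ (mem_image_of_mem f hi)))
        (PointedCone.smul_mem _ hcoef (Submodule.subset_span (mem_insert _ _)))
    have hu_eq : u = T u + (u d₀ / f a d₀) • f a := by simp [hT]
    rw [hu_eq]
    exact add_mem (hTf hTu)
      (PointedCone.smul_mem _ (div_nonneg hud₀.le ha.le) (Submodule.subset_span (mem_insert _ _)))

lemma eventually_add_smul_mem_polyhedron [Finite ι] {f : ι → E →L[ℝ] ℝ} {α : ι → ℝ} {xb d : E}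
    (hxb : xb ∈ polyhedron f α) (hd : ∀ i, f i xb = α i → f i d ≤ 0) :
    ∀ᶠ t in 𝓝[>] (0 : ℝ), xb + t • d ∈ polyhedron f α := by
  refine eventually_all.2 fun i => ?_
  simp only [map_add, map_smul, smul_eq_mul]
  rcases (hxb i).eq_or_lt with hi | hi
  · filter_upwards [self_mem_nhdsWithin] with t (ht : 0 < t)
    linarith [mul_nonpos_of_nonneg_of_nonpos ht.le (hd i hi)]
  · have hcont : Tendsto (fun t : ℝ => f i xb + t * f i d) (𝓝 0) (𝓝 (f i xb)) :=
      (by fun_prop : Continuous fun t : ℝ => f i xb + t * f i d).tendsto' 0 _ (by simp)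
    exact nhdsWithin_le_nhds ((hcont.eventually (gt_mem_nhds hi)).mono fun t ht => ht.le)

theorem normalCone_polyhedron [Finite ι] {f : ι → E →L[ℝ] ℝ} {α : ι → ℝ} {xb : E}
    (hxb : xb ∈ polyhedron f α) :
    normalCone (polyhedron f α) xb = PointedCone.hull ℝ (f '' {i | f i xb = α i}) := by
  refine Subset.antisymm (fun u hu => ?_) (hull_subset_normalCone ?_)
  · refine mem_hull_image_of_forall_nonpos (toFinite _) fun d hd => ?_
    obtain ⟨t, ht_mem, ht⟩ :=
      ((eventually_add_smul_mem_polyhedron hxb hd).and self_mem_nhdsWithin).exists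
    have htu := hu _ ht_mem
    rw [add_sub_cancel_left, map_smul, smul_eq_mul] at htu
    exact nonpos_of_mul_nonpos_right htu ht
  · rintro _ ⟨i, hi, rfl⟩ x hx
    rw [map_sub]
    linarith [hx i, hi.symm]

end Polyhedron

theorem normalCone_inter_pcs_pcs
    (P₁ P₂ : Set X) (hP₁ : IsPolyhedral P₁) (hP₂ : IsPolyhedral P₂)
    (xb : X) (hxb : xb ∈ P₁ ∩ P₂) :
    normalCone (P₁ ∩ P₂) xb = normalCone P₁ xb + normalCone P₂ xb := by
  obtain ⟨m, f, α, rfl⟩ := hP₁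
  obtain ⟨n, g, β, rfl⟩ := hP₂
  change normalCone (polyhedron f α ∩ polyhedron g β) xb
    = normalCone (polyhedron f α) xb + normalCone (polyhedron g β) xb
  have hactive : Sum.elim f g '' {k | Sum.elim f g k xb = Sum.elim α β k}
      = f '' {i | f i xb = α i} ∪ g '' {j | g j xb = β j} := by
    ext φ
    simp [Sum.exists]
  rw [normalCone_polyhedron hxb.1, normalCone_polyhedron hxb.2, polyhedron_inter,
    normalCone_polyhedron (polyhedron_inter f α g β ▸ hxb), hactive, PointedCone.hull,
    Submodule.span_union, Submodule.coe_sup]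
end

section
/- Let f₁ : X → (−∞, ∞] be a polyhedral convex function and f₂ : X → (−∞, ∞] a generalized polyhedral convex function. Then ∂(f₁ + f₂)(x̄) = ∂f₁(x̄) + ∂f₂(x̄) for every x̄ ∈ dom(f₁) ∩ dom(f₂). -/
open Set Pointwise

variable {X : Type*} [AddCommGroup X] [Module ℝ X] [TopologicalSpace X]
  [IsTopologicalAddGroup X] [ContinuousSMul ℝ X] [LocallyConvexSpace ℝ X] [T2Space X]
variable {Y : Type*} [AddCommGroup Y] [Module ℝ Y] [TopologicalSpace Y]
  [IsTopologicalAddGroup Y] [ContinuousSMul ℝ Y] [LocallyConvexSpace ℝ Y] [T2Space Y]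
variable {Z : Type*} [AddCommGroup Z] [Module ℝ Z] [TopologicalSpace Z]
  [IsTopologicalAddGroup Z] [ContinuousSMul ℝ Z] [LocallyConvexSpace ℝ Z] [T2Space Z]

open Filter Topology

/-!
If `g ∈ ∂(f₁ + f₂)(x̄)`, then `(x, t₁, t₂) ↦ g x - t₁ - t₂` is normal at `(x̄, f₁ x̄, f₂ x̄)` to the
intersection of the lifted epigraphs `{(x, t₁, t₂) | (x, t₁) ∈ epi f₁}` (polyhedral) and
`{(x, t₁, t₂) | (x, t₂) ∈ epi f₂}` (generalized polyhedral). The normal cone intersection rule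
splits it as `ψ₁ + ψ₂` with `ψᵢ` normal to the `i`-th lifted epigraph; such a `ψᵢ` ignores the other
real coordinate, so it has slope `-1` in its own one and its restriction to `X` is a subgradient
of `fᵢ`.

The intersection rule is Farkas' lemma on the direction space `L` of the affine part: a direction
in `L` respecting the active constraints of both sets stays feasible for a short step, so on `L` the
normal functional is a nonnegative combination of active constraints. The part coming from the
first set is a normal to it, and the remainder is normal to the second set, which lies in the base
point plus `L`.
-/

section Farkas

variable {𝕜 V ι : Type*} [Field 𝕜] [LinearOrder 𝕜] [IsStrictOrderedRing 𝕜]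
  [AddCommGroup V] [Module 𝕜 V]

theorem Module.Dual.exists_nonneg_eq_sum_smul_of_le_zero [DecidableEq ι] (s : Finset ι)
    (u : ι → Module.Dual 𝕜 V) (v : Module.Dual 𝕜 V) (h : ∀ x, (∀ i ∈ s, u i x ≤ 0) → v x ≤ 0) :
    ∃ c : ι → 𝕜, (∀ i ∈ s, 0 ≤ c i) ∧ v = ∑ i ∈ s, c i • u i := by
  induction s using Finset.induction_on generalizing u v with
  | empty =>
    refine ⟨0, by simp, ?_⟩
    ext x
    have := h (-x) (by simp)
    simp only [map_neg, neg_nonpos] at this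
    simpa using le_antisymm (h x (by simp)) this
  | insert a s ha ih =>
    suffices ∃ t : 𝕜, 0 ≤ t ∧ ∃ c : ι → 𝕜, (∀ i ∈ s, 0 ≤ c i) ∧
        v = t • u a + ∑ i ∈ s, c i • u i by
      obtain ⟨t, ht, c, hc, rfl⟩ := this
      refine ⟨Function.update c a t, ?_, ?_⟩
      · simp only [Finset.forall_mem_insert, Function.update_self]
        exact ⟨ht, fun i hi => by
          rw [Function.update_of_ne (ne_of_mem_of_not_mem hi ha)]; exact hc i hi⟩
      · rw [Finset.sum_insert ha, Function.update_self]
        congr 1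
        exact Finset.sum_congr rfl fun i hi => by
          rw [Function.update_of_ne (ne_of_mem_of_not_mem hi ha)]
    by_cases hs : ∀ x, (∀ i ∈ s, u i x ≤ 0) → v x ≤ 0
    · obtain ⟨c, hc, hv⟩ := ih u v hs
      exact ⟨0, le_rfl, c, hc, by simpa using hv⟩
    push Not at hs
    obtain ⟨x₀, hx₀, hvx₀⟩ := hs
    have hax₀ : 0 < u a x₀ := by
      by_contra! hle
      exact hvx₀.not_ge (h x₀ (Finset.forall_mem_insert _ _ _ |>.2 ⟨hle, hx₀⟩))
    -- Fourier–Motzkin: eliminate `u a` by projecting onto its kernel along `x₀`.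
    set P : V →ₗ[𝕜] V := LinearMap.id - (u a).smulRight ((u a x₀)⁻¹ • x₀)
    have hP : ∀ (φ : Module.Dual 𝕜 V) x, φ x = φ (P x) + φ x₀ / u a x₀ * u a x := by
      intro φ x
      simp only [P, LinearMap.sub_apply, LinearMap.id_coe, id_eq, LinearMap.coe_smulRight,
        map_sub, map_smul, smul_eq_mul]
      field_simp
      ring
    have huaP : ∀ x, u a (P x) = 0 := fun x => by
      have := hP (u a) x
      rw [div_self hax₀.ne'] at this
      linarith
    obtain ⟨c, hc, hvc⟩ := ih (fun i => u i ∘ₗ P) (v ∘ₗ P) fun x hx =>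
      h (P x) (Finset.forall_mem_insert _ _ _ |>.2 ⟨(huaP x).le, hx⟩)
    have hsum : ∑ i ∈ s, c i * u i x₀ ≤ 0 :=
      Finset.sum_nonpos fun i hi => mul_nonpos_of_nonneg_of_nonpos (hc i hi) (hx₀ i hi)
    refine ⟨(v x₀ - ∑ i ∈ s, c i * u i x₀) / u a x₀, div_nonneg (by linarith) hax₀.le, c, hc, ?_⟩
    ext x
    have hvx := congrArg (fun φ => φ x) hvc
    simp only [LinearMap.comp_apply, LinearMap.coe_sum, Finset.sum_apply,
      LinearMap.smul_apply, smul_eq_mul] at hvx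
    simp only [LinearMap.add_apply, LinearMap.coe_sum, Finset.sum_apply,
      LinearMap.smul_apply, smul_eq_mul]
    have hexp : ∑ i ∈ s, c i * u i (P x) = ∑ i ∈ s, c i * u i x -
        (∑ i ∈ s, c i * u i x₀) / u a x₀ * u a x := by
      rw [Finset.sum_div, Finset.sum_mul, ← Finset.sum_sub_distrib]
      refine Finset.sum_congr rfl fun i _ => ?_
      rw [hP (u i) x]
      ring
    rw [hP v x, hvx, hexp]
    ring

end Farkas

section Polyhedral

variable {V : Type*} [AddCommGroup V] [Module ℝ V] [TopologicalSpace V]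

theorem eventually_forall_apply_add_smul_le {ι : Type*} [Finite ι] (u : ι → V →L[ℝ] ℝ)
    (α : ι → ℝ) {z d : V} (hz : ∀ i, u i z ≤ α i) (hd : ∀ i, u i z = α i → u i d ≤ 0) :
    ∀ᶠ ε in 𝓝[>] (0 : ℝ), ∀ i, u i (z + ε • d) ≤ α i := by
  refine eventually_all.2 fun i => ?_
  simp only [map_add, map_smul, smul_eq_mul]
  rcases (hz i).lt_or_eq with hlt | heq
  · have hlim : Tendsto (fun ε : ℝ => u i z + ε * u i d) (𝓝 0) (𝓝 (u i z)) := by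
      have hcont : Continuous fun ε : ℝ => u i z + ε * u i d := by fun_prop
      simpa using hcont.tendsto 0
    exact (hlim.eventually (eventually_le_nhds hlt)).filter_mono nhdsWithin_le_nhds
  · filter_upwards [self_mem_nhdsWithin] with ε (hε : 0 < ε)
    nlinarith [hd i heq]

theorem sum_smul_mem_normalCone_s13 {ι : Type*} (u : ι → V →L[ℝ] ℝ) (α : ι → ℝ) {z : V}
    (s : Finset ι) (hs : ∀ i ∈ s, u i z = α i) {c : ι → ℝ} (hc : ∀ i ∈ s, 0 ≤ c i) :
    ∑ i ∈ s, c i • u i ∈ normalCone {x | ∀ i, u i x ≤ α i} z := by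
  intro x hx
  simp only [sum_apply, smul_apply, smul_eq_mul]
  refine Finset.sum_nonpos fun i hi => mul_nonpos_of_nonneg_of_nonpos (hc i hi) ?_
  rw [map_sub, hs i hi]
  exact sub_nonpos.2 (hx i)

theorem normalCone_inter_subset_add {Ω₁ Ω₂ : Set V} (h₁ : IsPolyhedral Ω₁)
    (h₂ : IsGPolyhedral Ω₂) {z : V} (hz₁ : z ∈ Ω₁) (hz₂ : z ∈ Ω₂) :
    normalCone (Ω₁ ∩ Ω₂) z ⊆ normalCone Ω₁ z + normalCone Ω₂ z := by
  classical
  obtain ⟨m, u, α, rfl⟩ := h₁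
  obtain ⟨_, a, L, ⟨n, w, β, rfl⟩, -, rfl⟩ := h₂
  obtain ⟨hzw, hzL⟩ := hz₂
  have hL : ∀ y ∈ a +ᵥ (L : Set V), y - z ∈ L := fun y hy => by
    rw [mem_vadd_set_iff_neg_vadd_mem, vadd_eq_add] at hy hzL
    simpa using L.sub_mem hy hzL
  intro φ hφ
  set s₁ := Finset.univ.filter fun i => u i z = α i
  set s₂ := Finset.univ.filter fun j => w j z = β j
  -- Only on `L`, not on `V`, is `φ` a nonnegative combination of the active constraints.
  let F : Fin m ⊕ Fin n → Module.Dual ℝ L :=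
    Sum.elim (fun i => (u i : V →ₗ[ℝ] ℝ) ∘ₗ L.subtype) (fun j => (w j : V →ₗ[ℝ] ℝ) ∘ₗ L.subtype)
  have hfeas : ∀ d : L, (∀ k ∈ s₁.disjSum s₂, F k d ≤ 0) → φ d ≤ 0 := by
    intro d hd
    have ev₁ := eventually_forall_apply_add_smul_le u α hz₁ fun i hi =>
      hd (.inl i) (by simp [s₁, hi])
    have ev₂ := eventually_forall_apply_add_smul_le w β hzw fun j hj =>
      hd (.inr j) (by simp [s₂, hj])
    obtain ⟨ε, ⟨hε₁, hε₂⟩, hε⟩ := ((ev₁.and ev₂).and self_mem_nhdsWithin).exists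
    have hmem : z + ε • (d : V) ∈ a +ᵥ (L : Set V) := by
      rw [mem_vadd_set_iff_neg_vadd_mem, vadd_eq_add] at hzL ⊢
      simpa [add_assoc] using L.add_mem hzL (L.smul_mem ε d.2)
    have := hφ (z + ε • (d : V)) ⟨hε₁, hε₂, hmem⟩
    rw [add_sub_cancel_left, map_smul, smul_eq_mul] at this
    exact nonpos_of_mul_nonpos_right this hε
  obtain ⟨c, hc, hφc⟩ :=
    Module.Dual.exists_nonneg_eq_sum_smul_of_le_zero _ F ((φ : V →ₗ[ℝ] ℝ) ∘ₗ L.subtype) hfeas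
  set φ₁ := ∑ i ∈ s₁, c (.inl i) • u i
  refine ⟨φ₁, sum_smul_mem_normalCone_s13 u α (z := z) s₁ (by simp [s₁])
    (fun i hi => hc _ (by simpa)), φ - φ₁, ?_, add_sub_cancel _ _⟩
  rintro y ⟨hyw, hyL⟩
  have hφy : φ (y - z) = φ₁ (y - z) + ∑ j ∈ s₂, c (.inr j) * w j (y - z) := by
    have := congrArg (fun f => f ⟨y - z, hL y hyL⟩) hφc
    simpa [Finset.sum_disjSum, F, φ₁] using this
  have hψ := sum_smul_mem_normalCone_s13 w β (z := z) s₂ (by simp [s₂])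
    (fun j hj => hc (.inr j) (by simpa)) y hyw
  simp only [sum_apply, smul_apply, smul_eq_mul] at hψ
  rw [sub_apply, hφy]
  linarith

end Polyhedral

section Preimage

variable {V W : Type*} [AddCommGroup V] [Module ℝ V] [TopologicalSpace V]
  [AddCommGroup W] [Module ℝ W] [TopologicalSpace W]

theorem IsPolyhedral.preimage {P : Set W} (hP : IsPolyhedral P) (π : V →L[ℝ] W) :
    IsPolyhedral (π ⁻¹' P) := by
  obtain ⟨m, u, α, rfl⟩ := hP
  exact ⟨m, fun i => (u i).comp π, α, rfl⟩

theorem IsGPolyhedral.preimage {Q : Set W} (hQ : IsGPolyhedral Q) (π : V →L[ℝ] W)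
    (hπ : Function.Surjective π) : IsGPolyhedral (π ⁻¹' Q) := by
  obtain ⟨P, a, L, hP, hL, rfl⟩ := hQ
  obtain ⟨b, rfl⟩ := hπ a
  refine ⟨π ⁻¹' P, b, L.comap (π : V →ₗ[ℝ] W), hP.preimage π, hL.preimage π.continuous, ?_⟩
  ext x
  simp [mem_vadd_set_iff_neg_vadd_mem]

theorem exists_eq_comp_of_mem_normalCone_preimage (π : V →L[ℝ] W) (σ : W →L[ℝ] V)
    (hσ : Function.RightInverse σ π) {Ω : Set W} {z : V} (hz : π z ∈ Ω) {ψ : V →L[ℝ] ℝ}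
    (hψ : ψ ∈ normalCone (π ⁻¹' Ω) z) : ∃ ψ' ∈ normalCone Ω (π z), ψ = ψ'.comp π := by
  have hker : ∀ k, π k = 0 → ψ k = 0 := fun k hk => by
    have h₁ := hψ (z + k) (by simpa [hk])
    have h₂ := hψ (z - k) (by simpa [hk])
    simp only [add_sub_cancel_left, sub_sub_cancel_left, map_neg] at h₁ h₂
    linarith
  have hfac : ψ = (ψ.comp σ).comp π := by
    ext x
    have := hker (x - σ (π x)) (by simp [hσ (π x)])
    simpa [sub_eq_zero] using this
  refine ⟨ψ.comp σ, fun y hy => ?_, hfac⟩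
  have hzσ : ψ (σ (π z)) = ψ z := (congrArg (· z) hfac).symm
  simpa [hzσ] using hψ (σ y) (by simpa [hσ y])

end Preimage

section Subdifferential

variable {E : Type*} [AddCommGroup E] [Module ℝ E] [TopologicalSpace E]

theorem subdiff_add_subset (f₁ f₂ : E → EReal) (xb : E) :
    subdiff f₁ xb + subdiff f₂ xb ⊆ subdiff (fun x => f₁ x + f₂ x) xb := by
  rintro _ ⟨g₁, hg₁, g₂, hg₂, rfl⟩ x
  calc (((g₁ + g₂) (x - xb) : ℝ) : EReal) + (f₁ xb + f₂ xb)
      = (g₁ (x - xb) + f₁ xb) + (g₂ (x - xb) + f₂ xb) := by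
        rw [add_apply, EReal.coe_add, add_add_add_comm]
    _ ≤ f₁ x + f₂ x := add_le_add (hg₁ x) (hg₂ x)

theorem comp_inl_mem_subdiff_of_mem_normalCone_epi {f : E → EReal} {xb : E} {s : ℝ}
    (hs : f xb = s) {ψ : E × ℝ →L[ℝ] ℝ} (hψ : ψ ∈ normalCone (epi f) (xb, s))
    (hψ₁ : ψ (0, 1) = -1) : ψ.comp (ContinuousLinearMap.inl ℝ E ℝ) ∈ subdiff f xb := by
  intro x
  rw [hs, ← EReal.coe_add, ← EReal.le_of_forall_lt_iff_le]
  intro t ht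
  have h := hψ (x, t) ht.le
  have hsplit : (x, t) - (xb, s) = ((x - xb, 0) : E × ℝ) + (t - s) • ((0 : E), (1 : ℝ)) := by
    ext <;> simp
  rw [hsplit, map_add, map_smul, hψ₁, smul_eq_mul] at h
  have : ψ (x - xb, 0) + s ≤ t := by linarith
  exact_mod_cast this

theorem coprod_mem_normalCone_of_mem_subdiff_add {f₁ f₂ : E → EReal} {xb : E} {s₁ s₂ : ℝ}
    (hs₁ : f₁ xb = s₁) (hs₂ : f₂ xb = s₂) {g : E →L[ℝ] ℝ}
    (hg : g ∈ subdiff (fun x => f₁ x + f₂ x) xb) :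
    g.coprod (-(ContinuousLinearMap.fst ℝ ℝ ℝ + ContinuousLinearMap.snd ℝ ℝ ℝ)) ∈
      normalCone ((ContinuousLinearMap.id ℝ E).prodMap (ContinuousLinearMap.fst ℝ ℝ ℝ) ⁻¹' epi f₁ ∩
        (ContinuousLinearMap.id ℝ E).prodMap (ContinuousLinearMap.snd ℝ ℝ ℝ) ⁻¹' epi f₂)
        (xb, s₁, s₂) := by
  rintro ⟨x, t₁, t₂⟩ ⟨h₁, h₂⟩
  have h : ((g (x - xb) : ℝ) : EReal) + (s₁ + s₂) ≤ t₁ + t₂ := by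
    rw [← hs₁, ← hs₂]
    exact (hg x).trans (add_le_add h₁ h₂)
  have : g (x - xb) + (s₁ + s₂) ≤ t₁ + t₂ := by exact_mod_cast h
  simp only [Prod.mk_sub_mk, ContinuousLinearMap.coprod_apply, add_apply, neg_apply,
    ContinuousLinearMap.coe_fst', ContinuousLinearMap.coe_snd']
  linarith

end Subdifferential

theorem subdifferential_sum_rule
    (f₁ f₂ : X → EReal) (hbot₁ : ∀ x, f₁ x ≠ ⊥) (hbot₂ : ∀ x, f₂ x ≠ ⊥)
    (hf₁ : IsPolyhedral (epi f₁)) (hf₂ : IsGPolyhedral (epi f₂))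
    (xb : X) (hdom₁ : f₁ xb ≠ ⊤) (hdom₂ : f₂ xb ≠ ⊤) :
    subdiff (fun x => f₁ x + f₂ x) xb = subdiff f₁ xb + subdiff f₂ xb := by
  refine Subset.antisymm (fun g hg => ?_) (subdiff_add_subset f₁ f₂ xb)
  obtain ⟨s₁, hs₁⟩ : ∃ s : ℝ, f₁ xb = s := ⟨_, (EReal.coe_toReal hdom₁ (hbot₁ xb)).symm⟩
  obtain ⟨s₂, hs₂⟩ : ∃ s : ℝ, f₂ xb = s := ⟨_, (EReal.coe_toReal hdom₂ (hbot₂ xb)).symm⟩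
  -- Lift both epigraphs to `X × ℝ × ℝ`, with one real coordinate for each function.
  let π₁ := (ContinuousLinearMap.id ℝ X).prodMap (ContinuousLinearMap.fst ℝ ℝ ℝ)
  let π₂ := (ContinuousLinearMap.id ℝ X).prodMap (ContinuousLinearMap.snd ℝ ℝ ℝ)
  let σ₁ := (ContinuousLinearMap.id ℝ X).prodMap (ContinuousLinearMap.inl ℝ ℝ ℝ)
  let σ₂ := (ContinuousLinearMap.id ℝ X).prodMap (ContinuousLinearMap.inr ℝ ℝ ℝ)
  have hσ₁ : Function.RightInverse σ₁ π₁ := fun _ => rfl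
  have hσ₂ : Function.RightInverse σ₂ π₂ := fun _ => rfl
  have hz₁ : π₁ (xb, s₁, s₂) ∈ epi f₁ := hs₁.le
  have hz₂ : π₂ (xb, s₁, s₂) ∈ epi f₂ := hs₂.le
  obtain ⟨_, hφ₁, _, hφ₂, hφ⟩ := normalCone_inter_subset_add (hf₁.preimage π₁)
    (hf₂.preimage π₂ hσ₂.surjective) hz₁ hz₂
    (coprod_mem_normalCone_of_mem_subdiff_add hs₁ hs₂ hg)
  obtain ⟨ψ₁, hψ₁, rfl⟩ := exists_eq_comp_of_mem_normalCone_preimage π₁ σ₁ hσ₁ hz₁ hφ₁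
  obtain ⟨ψ₂, hψ₂, rfl⟩ := exists_eq_comp_of_mem_normalCone_preimage π₂ σ₂ hσ₂ hz₂ hφ₂
  have h := fun p => congrArg (· p) hφ
  refine ⟨_, comp_inl_mem_subdiff_of_mem_normalCone_epi hs₁ hψ₁ ?_,
    _, comp_inl_mem_subdiff_of_mem_normalCone_epi hs₂ hψ₂ ?_, ?_⟩
  · simpa [π₁, π₂, Prod.mk_zero_zero] using h (0, 1, 0)
  · simpa [π₁, π₂, Prod.mk_zero_zero] using h (0, 0, 1)
  · ext x
    simpa [π₁, π₂] using h (x, 0, 0)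
end

section
/- Let f : X → (−∞, ∞] be a generalized polyhedral convex function, x̄ ∈ dom(f), γ = f(x̄), and L_γ = {x : f(x) ≤ γ}. Then N(x̄; L_γ) = ∪_{λ ≥ 0} λ ⊙ ∂f(x̄), where λ ⊙ ∂f(x̄) = λ∂f(x̄) for λ > 0 and 0 ⊙ ∂f(x̄) = ∂^∞f(x̄) = {x* : (x*, 0) ∈ N((x̄, f(x̄)); epi f)} is the singular subdifferential. -/
open Set Pointwise

variable {X : Type*} [AddCommGroup X] [Module ℝ X] [TopologicalSpace X]
  [IsTopologicalAddGroup X] [ContinuousSMul ℝ X] [LocallyConvexSpace ℝ X] [T2Space X]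
variable {Y : Type*} [AddCommGroup Y] [Module ℝ Y] [TopologicalSpace Y]
  [IsTopologicalAddGroup Y] [ContinuousSMul ℝ Y] [LocallyConvexSpace ℝ Y] [T2Space Y]
variable {Z : Type*} [AddCommGroup Z] [Module ℝ Z] [TopologicalSpace Z]
  [IsTopologicalAddGroup Z] [ContinuousSMul ℝ Z] [LocallyConvexSpace ℝ Z] [T2Space Z]

/-! A normal `g` to the sublevel set at `xb` is a normal to `epi f ∩ {(x, t) | t ≤ γ}` at
`(xb, γ)`. As `epi f` is generalized polyhedral, no constraint qualification is needed: Farkas'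
lemma applied to the constraints active at `(xb, γ)` splits `(g, 0)` as `(g, -μ) + μ • (0, 1)`
with `μ ≥ 0` and `(g, -μ)` normal to `epi f`. For `μ = 0` this says `g ∈ ∂^∞f(xb)`, and for
`μ > 0` it says `μ⁻¹ • g ∈ ∂f(xb)`. -/

namespace PointedCone

theorem mem_hull_image_of_forall_nonpos {V ι : Type*} [AddCommGroup V] [Module ℝ V]
    (s : Finset ι) (ψ : ι → Module.Dual ℝ V) (G : Module.Dual ℝ V)
    (h : ∀ v, (∀ i ∈ s, ψ i v ≤ 0) → G v ≤ 0) : G ∈ hull ℝ (ψ '' s) := by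
  classical
  induction s using Finset.induction_on generalizing ψ G with
  | empty =>
    have hG : G = 0 := LinearMap.ext fun v => by
      have := h (-v) (by simp)
      simp only [map_neg, neg_nonpos] at this
      exact le_antisymm (h v (by simp)) this
    exact hG ▸ zero_mem _
  | @insert j t hj ih =>
    set C := hull ℝ (ψ '' ↑(insert j t))
    by_cases hc : ∀ v, (∀ i ∈ t, ψ i v ≤ 0) → G v ≤ 0
    · exact Submodule.span_mono (image_mono (by simp)) (ih ψ G hc)
    push Not at hc
    obtain ⟨v₀, hv₀t, hv₀G⟩ := hc
    have hj₀ : 0 < ψ j v₀ := by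
      by_contra! hle
      exact (h v₀ (by simpa [hle] using hv₀t)).not_gt hv₀G
    -- project every functional along `ψ j` onto the functionals vanishing at `v₀`
    let π : Module.Dual ℝ V → Module.Dual ℝ V := fun φ => φ - (φ v₀ / ψ j v₀) • ψ j
    have hπ : ∀ φ v, π φ v = φ (v - (ψ j v / ψ j v₀) • v₀) := fun φ v => by
      simp only [π, LinearMap.sub_apply, LinearMap.smul_apply, map_sub, map_smul, smul_eq_mul]
      ring
    have hπj : ∀ v, ψ j (v - (ψ j v / ψ j v₀) • v₀) = 0 := fun v => by
      rw [← hπ]; simp [π, hj₀.ne']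
    have hπG : π G ∈ hull ℝ ((π ∘ ψ) '' t) :=
      ih (π ∘ ψ) (π G) fun v hv => by
        rw [hπ]
        refine h _ fun i hi => ?_
        rcases Finset.mem_insert.1 hi with rfl | hi
        · exact (hπj v).le
        · simpa [hπ] using hv i hi
    have hψ : ∀ i ∈ insert j t, ψ i ∈ C := fun i hi => subset_hull (mem_image_of_mem ψ hi)
    have hπt : (π ∘ ψ) '' t ⊆ C := by
      rintro _ ⟨i, hi, rfl⟩
      have hcoef : 0 ≤ -(ψ i v₀ / ψ j v₀) :=
        neg_nonneg.2 (div_nonpos_of_nonpos_of_nonneg (hv₀t i hi) hj₀.le)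
      have : π (ψ i) = ψ i + (-(ψ i v₀ / ψ j v₀)) • ψ j := by
        ext v; simp [π, sub_eq_add_neg]
      rw [Function.comp_apply, this]
      exact C.add_mem (hψ i (Finset.mem_insert_of_mem hi))
        (C.smul_mem hcoef (hψ j (Finset.mem_insert_self j t)))
    have hG : G = π G + (G v₀ / ψ j v₀) • ψ j := by simp [π]
    rw [hG]
    exact C.add_mem (Submodule.span_le.2 hπt hπG)
      (C.smul_mem (div_pos hv₀G hj₀).le (hψ j (Finset.mem_insert_self j t)))

end PointedCone

open Filter Topology in
theorem exists_pos_forall_add_smul_le {E ι : Type*} [AddCommGroup E] [Module ℝ E] [Finite ι]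
    (Φ : ι → E →ₗ[ℝ] ℝ) {c : ι → ℝ} {p d : E} (hp : ∀ i, Φ i p ≤ c i)
    (hd : ∀ i, Φ i p = c i → Φ i d ≤ 0) :
    ∃ τ : ℝ, 0 < τ ∧ ∀ i, Φ i (p + τ • d) ≤ c i := by
  have hev : ∀ i, ∀ᶠ τ in 𝓝[>] (0 : ℝ), Φ i (p + τ • d) ≤ c i := fun i => by
    simp only [map_add, map_smul, smul_eq_mul]
    rcases (hp i).eq_or_lt with hact | hlt
    · filter_upwards [self_mem_nhdsWithin] with τ (hτ : 0 < τ)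
      nlinarith [hd i hact]
    · have hcont : Continuous fun τ : ℝ => Φ i p + τ * Φ i d := by fun_prop
      have hlim : Tendsto (fun τ : ℝ => Φ i p + τ * Φ i d) (𝓝[>] 0) (𝓝 (Φ i p)) := by
        simpa using (hcont.tendsto 0).mono_left nhdsWithin_le_nhds
      exact (hlim.eventually_lt_const hlt).mono fun _ => le_of_lt
  have hall : ∀ᶠ τ in 𝓝[>] (0 : ℝ), 0 < τ ∧ ∀ i, Φ i (p + τ • d) ≤ c i :=
    eventually_mem_nhdsWithin.and (eventually_all.2 hev)
  exact hall.exists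

section

variable {E : Type*} [AddCommGroup E] [Module ℝ E]

theorem mem_vadd_submodule_iff {L : Submodule ℝ E} {a p q : E} (hp : p ∈ a +ᵥ (L : Set E)) :
    q ∈ a +ᵥ (L : Set E) ↔ q - p ∈ L := by
  rw [mem_vadd_set_iff_neg_vadd_mem] at hp ⊢
  rw [show q - p = (-a +ᵥ q) - (-a +ᵥ p) by simp only [vadd_eq_add]; abel]
  exact (L.sub_mem_iff_left hp).symm

variable [TopologicalSpace E]

theorem IsGPolyhedral.exists_sub_smul_mem_normalCone {Q : Set E} (hQ : IsGPolyhedral Q) {p : E}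
    (hp : p ∈ Q) {ψ G : E →L[ℝ] ℝ} (hG : G ∈ normalCone (Q ∩ {q | ψ q ≤ ψ p}) p) :
    ∃ μ : ℝ, 0 ≤ μ ∧ G - μ • ψ ∈ normalCone Q p := by
  classical
  obtain ⟨P, a, L, ⟨m, Φ, c, rfl⟩, -, rfl⟩ := hQ
  obtain ⟨hpP, hpL⟩ := hp
  let θ : Option {i // Φ i p = c i} → Module.Dual ℝ L := fun o =>
    o.elim ((ψ : E →ₗ[ℝ] ℝ) ∘ₗ L.subtype) fun i => (Φ i : E →ₗ[ℝ] ℝ) ∘ₗ L.subtype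
  have hcone : ∀ d : L, (∀ o, θ o d ≤ 0) → G d ≤ 0 := fun d hd => by
    obtain ⟨τ, hτ, hτP⟩ := exists_pos_forall_add_smul_le (fun i => (Φ i : E →ₗ[ℝ] ℝ))
      (d := d) hpP fun i hi => hd (some ⟨i, hi⟩)
    have hmem : p + τ • (d : E) ∈
        {x | ∀ i, Φ i x ≤ c i} ∩ (a +ᵥ (L : Set E)) ∩ {q | ψ q ≤ ψ p} := by
      refine ⟨⟨hτP, (mem_vadd_submodule_iff hpL).2 ?_⟩, ?_⟩
      · simpa using L.smul_mem τ d.2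
      · have := hd none
        simp only [θ, Option.elim, LinearMap.comp_apply] at this
        simpa using mul_nonpos_of_nonneg_of_nonpos hτ.le this
    have := hG _ hmem
    simp only [add_sub_cancel_left, map_smul, smul_eq_mul] at this
    exact nonpos_of_mul_nonpos_right this hτ
  have hGL : (G : E →ₗ[ℝ] ℝ) ∘ₗ L.subtype ∈ PointedCone.hull ℝ (range θ) := by
    simpa using PointedCone.mem_hull_image_of_forall_nonpos Finset.univ θ _ (by simpa using hcone)
  obtain ⟨w, hw⟩ := (Submodule.mem_span_range_iff_exists_fun _).1 hGL
  refine ⟨w none, (w none).2, fun q hq => ?_⟩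
  simp only [← Nonneg.coe_smul] at hw
  have hGd := LinearMap.congr_fun hw ⟨q - p, (mem_vadd_submodule_iff hpL).1 hq.2⟩
  simp only [Fintype.sum_option, LinearMap.add_apply, LinearMap.coe_sum, Finset.sum_apply,
    LinearMap.smul_apply, θ, Option.elim, LinearMap.comp_apply, Submodule.coe_subtype,
    smul_eq_mul, ContinuousLinearMap.coe_coe] at hGd
  have hactive : ∑ i : {i // Φ i p = c i}, (w (some i) : ℝ) * Φ i (q - p) ≤ 0 :=
    Finset.sum_nonpos fun i _ => mul_nonpos_of_nonneg_of_nonpos (w _).2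
      (by rw [map_sub, i.2]; linarith [hq.1 i])
  simp only [sub_apply, smul_apply, smul_eq_mul]
  linarith

theorem mem_subdiff_iff_forall_le {f : E → EReal} {xb : E} {γ : ℝ} (hγ : f xb = γ)
    {g : E →L[ℝ] ℝ} : g ∈ subdiff f xb ↔ ∀ x (t : ℝ), f x ≤ t → g (x - xb) ≤ t - γ := by
  refine ⟨fun hg x t hxt => ?_, fun hg x => EReal.le_of_forall_lt_iff_le.1 fun t hxt => ?_⟩
  · have := (hg x).trans hxt
    rw [hγ, ← EReal.coe_add, EReal.coe_le_coe_iff] at this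
    linarith
  · rw [hγ, ← EReal.coe_add, EReal.coe_le_coe_iff]
    linarith [hg x t hxt.le]

end

theorem exists_multiplier_of_mem_normalCone_sublevel {E : Type*} [AddCommGroup E] [Module ℝ E]
    [TopologicalSpace E] {f : E → EReal} (hf : IsGPolyhedral (epi f)) {xb : E} {γ : ℝ}
    (hγ : f xb = γ) {g : E →L[ℝ] ℝ} (hg : g ∈ normalCone {x | f x ≤ γ} xb) :
    ∃ μ : ℝ, 0 ≤ μ ∧ ∀ x (t : ℝ), f x ≤ t → g (x - xb) ≤ μ * (t - γ) := by
  have hxb : (xb, γ) ∈ epi f := by simp [epi, hγ]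
  obtain ⟨μ, hμ, hepi⟩ := hf.exists_sub_smul_mem_normalCone hxb
    (ψ := .snd ℝ E ℝ) (G := g.comp (.fst ℝ E ℝ)) fun q ⟨hq, hqγ⟩ => by
      simpa using hg q.1 ((hq : f q.1 ≤ q.2).trans (EReal.coe_le_coe_iff.2 hqγ))
  exact ⟨μ, hμ, fun x t hxt => by simpa using hepi (x, t) hxt⟩

theorem normalCone_sublevel_general
    (f : X → EReal) (hf : IsGPolyhedral (epi f))
    (xb : X) (γ : ℝ) (hγ : f xb = (γ : EReal)) :
    normalCone {x : X | f x ≤ (γ : EReal)} xb =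
      ⋃ l : {l : ℝ // 0 ≤ l},
        (if (l : ℝ) = 0 then singSubdiff f xb else (l : ℝ) • subdiff f xb) := by
  ext g
  simp only [mem_iUnion]
  constructor
  · intro hg
    obtain ⟨μ, hμ, hmul⟩ := exists_multiplier_of_mem_normalCone_sublevel hf hγ hg
    rcases hμ.eq_or_lt with rfl | hμ
    · exact ⟨⟨0, le_rfl⟩, by simpa [singSubdiff] using hmul⟩
    · refine ⟨⟨μ, hμ.le⟩, ?_⟩
      rw [if_neg hμ.ne']
      refine ⟨μ⁻¹ • g, (mem_subdiff_iff_forall_le hγ).2 fun x t hxt => ?_, smul_inv_smul₀ hμ.ne' g⟩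
      rw [smul_apply, smul_eq_mul, inv_mul_le_iff₀ hμ]
      exact hmul x t hxt
  · rintro ⟨⟨l, hl⟩, hg⟩ x (hx : f x ≤ γ)
    split_ifs at hg
    · exact hg x γ hx
    · obtain ⟨h, hh, rfl⟩ := hg
      have hhx := (mem_subdiff_iff_forall_le hγ).1 hh x γ hx
      simpa using mul_nonpos_of_nonneg_of_nonpos hl (show h (x - xb) ≤ 0 by linarith)

theorem normalCone_sublevel
    (f : X → EReal) (hbot : ∀ x, f x ≠ ⊥) (hf : IsGPolyhedral (epi f))
    (xb : X) (γ : ℝ) (hγ : f xb = (γ : EReal)) :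
    normalCone {x : X | f x ≤ (γ : EReal)} xb =
      ⋃ l : {l : ℝ // 0 ≤ l},
        (if (l : ℝ) = 0 then singSubdiff f xb else (l : ℝ) • subdiff f xb) :=
  normalCone_sublevel_general f hf xb γ hγ
end
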